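/- arXiv:2412.04491 — 2 statements merged into one kernel-verified Lean document; each statement's English description precedes it below -/
import Mathlib

section
/- The vector a = (1/√2, -1/√2, 0) is a unit vector satisfying (T_c a) · (T_{d,1} a) = -1. -/
open Matrix

noncomputable def Tb : Matrix (Fin 3) (Fin 3) ℝ := !![0, 1, 0; 1, 0, 0; 0, 0, -1]

noncomputable def Tc : Matrix (Fin 3) (Fin 3) ℝ :=
  !![-1/2, -1/2, 1/Real.sqrt 2; -1/2, -1/2, -1/Real.sqrt 2; 1/Real.sqrt 2, -1/Real.sqrt 2, 0]

noncomputable def Td1 : Matrix (Fin 3) (Fin 3) ℝ :=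
  !![-1/2, -1/2, 1/Real.sqrt 2; -1/2, -1/2, -1/Real.sqrt 2; -1/Real.sqrt 2, 1/Real.sqrt 2, 0]

noncomputable def Td2 : Matrix (Fin 3) (Fin 3) ℝ :=
  !![-1/2, -1/2, -1/Real.sqrt 2; -1/2, -1/2, 1/Real.sqrt 2; -1/Real.sqrt 2, 1/Real.sqrt 2, 0]

theorem f2_solution :
    let a : Fin 3 → ℝ := ![1/Real.sqrt 2, -1/Real.sqrt 2, 0]
    a ⬝ᵥ a = 1 ∧ (Tc.mulVec a) ⬝ᵥ (Td1.mulVec a) = -1 := by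
  have h2 : Real.sqrt 2 ^ 2 = 2 := Real.sq_sqrt (by norm_num)
  have h0 : Real.sqrt 2 ≠ 0 := by positivity
  intro a
  constructor <;>
  · simp [a, Tc, Td1, dotProduct, mulVec, Fin.sum_univ_three]
    field_simp
    try nlinarith [h2]
end

section
/- If a is a unit vector with a_z = 0 and a·(T_b a) = -1/3, then a = ±(1/√(1+(2√2−3)²)) · (1, 2√2−3, 0) or a = ±(1/√(1+(2√2−3)²)) · (2√2−3, 1, 0). -/
open Matrix

/-!
Writing `a = (x, y, 0)`, the hypotheses say `x² + y² = 1` and `xy = -1/6`. These two symmetric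
functions determine the unordered pair `{x, y}` up to a common sign, since they fix `(x + y)²` and
`(x - y)²`. With `t = 2√2 - 3` and `k = 1/√(1 + t²)`, the pair `(k, kt)` is one solution:
`t² + 6t + 1 = 0` gives `1 + t² = -6t`, hence `k · kt = t / (1 + t²) = -1/6`.
-/

theorem eq_or_eq_swap_of_sq_add_sq_eq_of_mul_eq {K : Type*} [Field K] [NeZero (2 : K)]
    {x y p q : K} (hs : x ^ 2 + y ^ 2 = p ^ 2 + q ^ 2) (hm : x * y = p * q) :
    (x = p ∧ y = q) ∨ (x = -p ∧ y = -q) ∨ (x = q ∧ y = p) ∨ (x = -q ∧ y = -p) := by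
  have h2 : (2 : K) ≠ 0 := two_ne_zero
  have hsum : (x + y) ^ 2 = (p + q) ^ 2 := by linear_combination hs + 2 * hm
  have hdiff : (x - y) ^ 2 = (p - q) ^ 2 := by linear_combination hs - 2 * hm
  rcases sq_eq_sq_iff_eq_or_eq_neg.mp hsum with hu | hu <;>
    rcases sq_eq_sq_iff_eq_or_eq_neg.mp hdiff with hv | hv
  · exact .inl ⟨mul_left_cancel₀ h2 (by linear_combination hu + hv),
      mul_left_cancel₀ h2 (by linear_combination hu - hv)⟩
  · exact .inr <| .inr <| .inl ⟨mul_left_cancel₀ h2 (by linear_combination hu + hv),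
      mul_left_cancel₀ h2 (by linear_combination hu - hv)⟩
  · exact .inr <| .inr <| .inr ⟨mul_left_cancel₀ h2 (by linear_combination hu + hv),
      mul_left_cancel₀ h2 (by linear_combination hu - hv)⟩
  · exact .inr <| .inl ⟨mul_left_cancel₀ h2 (by linear_combination hu + hv),
      mul_left_cancel₀ h2 (by linear_combination hu - hv)⟩

theorem two_mul_sqrt_two_sub_three_sq_add_six_mul_add_one :
    (2 * Real.sqrt 2 - 3) ^ 2 + 6 * (2 * Real.sqrt 2 - 3) + 1 = 0 := by
  have h := Real.sq_sqrt (show (0 : ℝ) ≤ 2 by norm_num)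
  linear_combination 4 * h

theorem div_one_add_sq_eq_neg_one_div_six {t : ℝ}
    (ht : t ^ 2 + 6 * t + 1 = 0) : t / (1 + t ^ 2) = -1 / 6 := by
  have ht0 : t ≠ 0 := by
    rintro rfl
    norm_num at ht
  rw [show 1 + t ^ 2 = -6 * t by linear_combination ht]
  field_simp

theorem one_div_sqrt_one_add_sq_sq_add_mul_sq (t : ℝ) :
    (1 / Real.sqrt (1 + t ^ 2)) ^ 2 + (1 / Real.sqrt (1 + t ^ 2) * t) ^ 2 = 1 := by
  have h : Real.sqrt (1 + t ^ 2) ^ 2 = 1 + t ^ 2 := Real.sq_sqrt (by positivity)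
  field_simp
  linarith

theorem one_div_sqrt_one_add_sq_mul_mul (t : ℝ) :
    1 / Real.sqrt (1 + t ^ 2) * (1 / Real.sqrt (1 + t ^ 2) * t) = t / (1 + t ^ 2) := by
  have h : Real.sqrt (1 + t ^ 2) ^ 2 = 1 + t ^ 2 := Real.sq_sqrt (by positivity)
  calc _ = t / Real.sqrt (1 + t ^ 2) ^ 2 := by ring
    _ = _ := by rw [h]

theorem dotProduct_self_fin_three (a : Fin 3 → ℝ) :
    a ⬝ᵥ a = a 0 ^ 2 + a 1 ^ 2 + a 2 ^ 2 := by
  rw [dotProduct, Fin.sum_univ_three]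
  ring

theorem dotProduct_Tb_mulVec (a : Fin 3 → ℝ) :
    a ⬝ᵥ Tb *ᵥ a = 2 * a 0 * a 1 - a 2 ^ 2 := by
  simp only [dotProduct, mulVec, Tb, Fin.sum_univ_three, of_apply, cons_val', cons_val_zero,
    cons_val_one, cons_val, cons_val_fin_one]
  ring

theorem kelvin_solutions (a : Fin 3 → ℝ) (ha : a ⬝ᵥ a = 1) (hz : a 2 = 0)
    (hk : a ⬝ᵥ Tb.mulVec a = -1/3) :
    let k : ℝ := 1/Real.sqrt (1 + (2*Real.sqrt 2 - 3)^2)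
    a = ![k, k*(2*Real.sqrt 2 - 3), 0] ∨ a = -![k, k*(2*Real.sqrt 2 - 3), 0] ∨
    a = ![k*(2*Real.sqrt 2 - 3), k, 0] ∨ a = -![k*(2*Real.sqrt 2 - 3), k, 0] := by
  intro k
  have hplane : a = ![a 0, a 1, 0] := by
    ext i
    fin_cases i <;> simp [hz]
  rw [dotProduct_self_fin_three, hz] at ha
  rw [dotProduct_Tb_mulVec, hz] at hk
  have hprod : a 0 * a 1 = k * (k * (2 * Real.sqrt 2 - 3)) := by
    rw [one_div_sqrt_one_add_sq_mul_mul, div_one_add_sq_eq_neg_one_div_six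
      two_mul_sqrt_two_sub_three_sq_add_six_mul_add_one]
    linarith
  have hnorm : a 0 ^ 2 + a 1 ^ 2 = k ^ 2 + (k * (2 * Real.sqrt 2 - 3)) ^ 2 := by
    rw [one_div_sqrt_one_add_sq_sq_add_mul_sq]
    linarith
  rw [hplane]
  rcases eq_or_eq_swap_of_sq_add_sq_eq_of_mul_eq hnorm hprod with
    ⟨hx, hy⟩ | ⟨hx, hy⟩ | ⟨hx, hy⟩ | ⟨hx, hy⟩ <;> simp [hx, hy]
end
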